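/- Let p be an odd prime, K a field of characteristic p with prime field K', N = (p+1)/2, and let I ⊆ K[x₀,…,x_N] be the ideal of all K'-points of P^N except one. Then I^{((p+3)/2)} is not contained in I², i.e., the containment I^{(Nr - (N-1))} ⊆ I^r fails for r = 2. -/

import Mathlib

open MvPolynomial

/-- The homogeneous ideal of a point of projective space (given by a
representative `π`). -/
noncomputable def pointIdeal {K : Type} [Field K] {n : ℕ} (π : Fin n → K) :
    Ideal (MvPolynomial (Fin n) K) :=
  Ideal.span {f | (∃ d, f.IsHomogeneous d) ∧ eval π f = 0}

/-!
Write `q = φ ∘ w` with `w` over `𝔽_p` and put `D = N (p - 1)`, so that `p² = 2 D + 1`.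

A homogeneous form `a` of degree `d ≤ D` vanishing at every `𝔽_p`-point off the line `𝔽_p ∙ w`
also vanishes at `w`: for `g = a X_{i₀}^{D - d}` the sum of `g` over all of `𝔽_p^{N+1}` is zero,
as in Chevalley–Warning, since `deg g = D < (N + 1)(p - 1)`; but only the line contributes, and
there the sum is `∑_c c^D g(w) = -g(w)`. Since `I` is homogeneous, every element of `I²` thus has
its component of degree `p²` vanishing at `q`.

On the other hand, the `p²` linear forms
`ℓ_{u,v} = X_{i₀} + ∑_j c_j (q_{i₀} X_{s j} - q_{s j} X_{i₀})`, `c = (u, v, v u, …, v u^{N-2})`,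
all take the value `q_{i₀}` at `q`, so their product `F` of degree `p²` does not vanish at `q`.
At a point `π` off the line of `q`, `ℓ_{u,v}(π) = 0` reads `c₀ + b₀ u + v P(u) = 0` for a
polynomial `P` of degree `≤ N - 2` built from the minors of `(q, π)`; this has at least
`p - (N - 2) = (p + 3) / 2` solutions `(u, v)`, so `F ∈ I^{((p+3)/2)}`.
-/

open Finset Submodule

theorem Ideal.prod_mem_pow_of_le_card {R ι : Type*} [CommSemiring R] {I : Ideal R}
    {s : Finset ι} {f : ι → R} {m : ℕ} [DecidablePred fun i => f i ∈ I]
    (h : m ≤ #{i ∈ s | f i ∈ I}) : ∏ i ∈ s, f i ∈ I ^ m := by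
  rw [← prod_filter_mul_prod_filter_not s fun i => f i ∈ I]
  refine Ideal.mul_mem_right _ _ (Ideal.pow_le_pow_right h ?_)
  simpa using Ideal.prod_mem_prod (I := fun _ => I) fun i hi => (mem_filter.1 hi).2

theorem FiniteField.sum_pow_eq_neg_one {F : Type*} [Field F] [Fintype F] {k : ℕ} (hk : k ≠ 0)
    (hdvd : Fintype.card F - 1 ∣ k) : ∑ c : F, c ^ k = -1 := by
  classical
  obtain ⟨l, rfl⟩ := hdvd
  have hpow : ∀ c : F, c ^ ((Fintype.card F - 1) * l) = if c = 0 then 0 else 1 := by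
    intro c
    split_ifs with hc
    · rw [hc, zero_pow hk]
    · rw [pow_mul, FiniteField.pow_card_sub_one_eq_one c hc, one_pow]
  simp only [hpow, sum_ite, sum_const_zero, sum_const, nsmul_one, zero_add, filter_ne',
    card_erase_of_mem (mem_univ _), card_univ]
  rw [Nat.cast_sub Fintype.card_pos, FiniteField.cast_card_eq_zero, Nat.cast_one, zero_sub]

namespace MvPolynomial

variable {σ R : Type*} [CommSemiring R]

theorem IsHomogeneous.eval_smul {f : MvPolynomial σ R} {n : ℕ} (hf : f.IsHomogeneous n)
    (c : R) (x : σ → R) : eval (c • x) f = c ^ n * eval x f := by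
  rw [eval_eq, eval_eq, mul_sum]
  refine sum_congr rfl fun d hd => ?_
  have hdeg : ∑ i ∈ d.support, d i = n := by
    rw [← hf (mem_support_iff.mp hd), Finsupp.weight_apply]
    simp [Finsupp.sum]
  simp only [Pi.smul_apply, smul_eq_mul, mul_pow]
  rw [prod_mul_distrib, prod_pow_eq_pow_sum, hdeg]
  ring

attribute [local instance] MvPolynomial.gradedAlgebra in
theorem homogeneousComponent_mul (a b : MvPolynomial σ R) (n : ℕ) :
    homogeneousComponent n (a * b) =
      ∑ ij ∈ antidiagonal n, homogeneousComponent ij.1 a * homogeneousComponent ij.2 b := by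
  have := DirectSum.coe_mul_apply_eq_sum_antidiagonal (homogeneousSubmodule σ R)
    (DirectSum.decompose (homogeneousSubmodule σ R) a)
    (DirectSum.decompose (homogeneousSubmodule σ R) b) n
  rw [← DirectSum.decompose_mul] at this
  simp only [DirectSum.decompose, Equiv.coe_fn_mk, decomposition.decompose'_apply] at this
  exact this

theorem eval_homogeneousComponent_mul_eq_zero {x : σ → R} {D : ℕ} {a b : MvPolynomial σ R}
    (ha : ∀ i ≤ D, eval x (homogeneousComponent i a) = 0)
    (hb : ∀ j ≤ D, eval x (homogeneousComponent j b) = 0) :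
    eval x (homogeneousComponent (2 * D + 1) (a * b)) = 0 := by
  rw [homogeneousComponent_mul, map_sum]
  refine sum_eq_zero fun ij hij => ?_
  rw [HasAntidiagonal.mem_antidiagonal] at hij
  rcases le_or_gt ij.1 D with h | h
  · rw [map_mul, ha _ h, zero_mul]
  · rw [map_mul, hb _ (by omega), mul_zero]

theorem eval_homogeneousComponent_eq_zero_of_mem_sq {I : Ideal (MvPolynomial σ R)} {x : σ → R}
    {D : ℕ} (hI : ∀ a ∈ I, ∀ i ≤ D, eval x (homogeneousComponent i a) = 0)
    {g : MvPolynomial σ R} (hg : g ∈ I ^ 2) :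
    eval x (homogeneousComponent (2 * D + 1) g) = 0 := by
  rw [sq] at hg
  refine Submodule.mul_induction_on hg
    (fun a ha b hb => eval_homogeneousComponent_mul_eq_zero (hI a ha) (hI b hb)) ?_
  intro g g' h h'
  rw [map_add, map_add, h, h', add_zero]

theorem sum_eval_comp_eq_zero {F K : Type*} [Field F] [Fintype F] [CommSemiring K]
    [Fintype σ] [DecidableEq σ] (φ : F →+* K) (f : MvPolynomial σ K)
    (h : f.totalDegree < (Fintype.card F - 1) * Fintype.card σ) :
    ∑ x : σ → F, eval (φ ∘ x) f = 0 := by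
  have hmonomial : ∀ d ∈ f.support, ∑ x : σ → F, ∏ i, x i ^ d i = 0 := fun d hd => by
    have hdeg := (totalDegree_monomial d (one_ne_zero (α := F))).trans_le (le_totalDegree hd)
    simpa [eval_monomial, Finsupp.prod_fintype] using sum_eval_eq_zero _ (hdeg.trans_lt h)
  calc ∑ x : σ → F, eval (φ ∘ x) f
      = ∑ d ∈ f.support, coeff d f * φ (∑ x : σ → F, ∏ i, x i ^ d i) := by
        simp only [eval_eq', Function.comp_apply, map_sum, map_prod, map_pow, mul_sum]
        exact sum_comm
    _ = 0 := sum_eq_zero fun d hd => by rw [hmonomial d hd, map_zero, mul_zero]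

end MvPolynomial

section OffLine

variable {F K σ : Type*} [Field F] [Field K] (φ : F →+* K)

theorem comp_mem_span_singleton_iff {v w : σ → F} : φ ∘ v ∈ K ∙ (φ ∘ w) ↔ v ∈ F ∙ w := by
  refine ⟨fun h => ?_, fun h => ?_⟩
  · obtain ⟨c, hc⟩ := mem_span_singleton.1 h
    have hc' : ∀ i, c * φ (w i) = φ (v i) := congrFun hc
    by_cases hw : w = 0
    · refine mem_span_singleton.2 ⟨0, funext fun i => φ.injective ?_⟩
      simpa [hw] using hc' i
    obtain ⟨i₀, hi₀⟩ := Function.ne_iff.mp hw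
    refine mem_span_singleton.2 ⟨v i₀ / w i₀, funext fun i => φ.injective ?_⟩
    have hφ : φ (w i₀) ≠ 0 := (map_ne_zero φ).2 hi₀
    simp only [Pi.smul_apply, smul_eq_mul, map_mul, map_div₀, ← hc']
    field_simp
  · obtain ⟨c, rfl⟩ := mem_span_singleton.1 h
    exact mem_span_singleton.2 ⟨φ c, funext fun i => by simp⟩

variable [Fintype F] [Fintype σ] [DecidableEq σ]

theorem eval_eq_zero_of_forall_notMem_span (hσ : 1 < Fintype.card σ)
    {a : MvPolynomial σ K} {d : ℕ} (ha : a.IsHomogeneous d)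
    (hd : d ≤ (Fintype.card F - 1) * (Fintype.card σ - 1)) {w : σ → F} (hw : w ≠ 0)
    (hvan : ∀ v ∉ F ∙ w, eval (φ ∘ v) a = 0) : eval (φ ∘ w) a = 0 := by
  classical
  obtain ⟨i₀, hi₀⟩ : ∃ i, w i ≠ 0 := Function.ne_iff.mp hw
  set k := (Fintype.card F - 1) * (Fintype.card σ - 1)
  have hF : 1 < Fintype.card F := Fintype.one_lt_card
  have hk : k ≠ 0 := Nat.mul_ne_zero (by omega) (by omega)
  set g := a * X i₀ ^ (k - d)
  have hg : g.IsHomogeneous k := by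
    simpa [Nat.add_sub_cancel' hd] using ha.mul (isHomogeneous_X_pow i₀ (k - d))
  have hsum : ∑ v : σ → F, eval (φ ∘ v) g = 0 :=
    sum_eval_comp_eq_zero φ g <| hg.totalDegree_le.trans_lt <|
      Nat.mul_lt_mul_of_pos_left (by omega) (by omega)
  have hline : ∑ v : σ → F, eval (φ ∘ v) g = ∑ c : F, eval (φ ∘ (c • w)) g := by
    calc ∑ v : σ → F, eval (φ ∘ v) g = ∑ v ∈ univ.image (· • w), eval (φ ∘ v) g := by
          refine (sum_subset (subset_univ _) fun v _ hv => ?_).symm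
          have hvw : v ∉ F ∙ w := by
            rw [mem_span_singleton]
            rintro ⟨c, rfl⟩
            exact hv (mem_image_of_mem _ (mem_univ c))
          simp [g, hvan v hvw]
      _ = ∑ c : F, eval (φ ∘ (c • w)) g := sum_image fun c _ c' _ h => smul_left_injective F hw h
  have hterm : ∀ c : F, eval (φ ∘ (c • w)) g = φ (c ^ k) * eval (φ ∘ w) g := by
    intro c
    rw [show φ ∘ (c • w) = φ c • (φ ∘ w) by ext; simp, hg.eval_smul, map_pow]
  rw [hline] at hsum
  simp only [hterm, ← sum_mul, ← map_sum,
    FiniteField.sum_pow_eq_neg_one hk (dvd_mul_right _ _)] at hsum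
  simpa [g, hi₀] using hsum

end OffLine

def momentCoeffs {F : Type*} [Monoid F] (n : ℕ) (uv : F × F) : Fin (n + 2) → F :=
  Fin.cons uv.1 fun j : Fin (n + 1) => uv.2 * uv.1 ^ (j : ℕ)

theorem card_le_add_card_zeros {F : Type*} [Field F] [Fintype F] [DecidableEq F] (n : ℕ)
    (c₀ : F) {b : Fin (n + 2) → F} (hb : b ≠ 0) :
    Fintype.card F ≤ n + #{uv : F × F | c₀ + ∑ j, momentCoeffs n uv j * b j = 0} := by
  set P : Polynomial F := ∑ j : Fin (n + 1), Polynomial.C (b j.succ) * Polynomial.X ^ (j : ℕ)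
  have hPeval : ∀ u v : F,
      c₀ + ∑ j, momentCoeffs n (u, v) j * b j = c₀ + b 0 * u + v * P.eval u := by
    intro u v
    simp only [Fin.sum_univ_succ (n := n + 1), P, Polynomial.eval_finsetSum, mul_sum,
      momentCoeffs, Fin.cons_zero, Fin.cons_succ, Polynomial.eval_mul,
      Polynomial.eval_C, Polynomial.eval_pow, Polynomial.eval_X, add_assoc]
    rw [mul_comm u (b 0)]
    congr 2
    exact sum_congr rfl fun j _ => by ring
  have hPcoeff : ∀ j : Fin (n + 1), P.coeff j = b j.succ := by
    intro j
    simp [P, Polynomial.finsetSum_coeff, Fin.val_inj]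
  set Z : Finset (F × F) := {uv | c₀ + ∑ j, momentCoeffs n uv j * b j = 0}
  by_cases hP : P = 0
  · have hb0 : b 0 ≠ 0 := fun h0 => hb <| funext fun j => Fin.cases h0
      (fun j => by rw [← hPcoeff, hP, Polynomial.coeff_zero, Pi.zero_apply]) j
    calc Fintype.card F ≤ #Z := by
          refine card_le_card_of_injOn (fun v => (-c₀ / b 0, v)) (fun v _ => ?_)
            fun v _ v' _ h => congrArg Prod.snd h
          simp only [coe_filter, mem_univ, true_and, Set.mem_ofPred_eq, Z, hPeval, hP,
            Polynomial.eval_zero]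
          field_simp
          ring
      _ ≤ n + #Z := Nat.le_add_left _ _
  · have hroots : #{u | P.eval u = 0} ≤ n := by
      refine (Polynomial.card_le_degree_of_subset_roots (p := P) fun u hu => ?_).trans ?_
      · simpa [Polynomial.mem_roots hP] using hu
      · exact Polynomial.natDegree_sum_le_of_forall_le _ _ fun j _ =>
          (Polynomial.natDegree_C_mul_X_pow_le _ _).trans (Nat.lt_succ_iff.mp j.isLt)
    have hnonroots : #{u | P.eval u ≠ 0} ≤ #Z := by
      refine card_le_card_of_injOn (fun u => (u, -(c₀ + b 0 * u) / P.eval u)) (fun u hu => ?_)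
        fun u _ u' _ h => congrArg Prod.fst h
      simp only [coe_filter, mem_univ, true_and, Set.mem_ofPred_eq] at hu
      simp only [coe_filter, mem_univ, true_and, Set.mem_ofPred_eq, Z, hPeval]
      field_simp
      ring
    calc Fintype.card F = #{u | P.eval u = 0} + #{u | P.eval u ≠ 0} :=
          (card_filter_add_card_filter_not _).symm
      _ ≤ n + #Z := add_le_add hroots hnonroots

theorem mem_span_singleton_of_minors_eq_zero {F : Type*} [Field F] {N : ℕ} {v w : Fin (N + 1) → F}
    {i₀ : Fin (N + 1)} (hi₀ : w i₀ ≠ 0)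
    (h : ∀ j, w i₀ * v (i₀.succAbove j) - w (i₀.succAbove j) * v i₀ = 0) : v ∈ F ∙ w := by
  refine mem_span_singleton.2 ⟨v i₀ / w i₀, funext fun i => ?_⟩
  rw [Pi.smul_apply, smul_eq_mul]
  rcases Fin.eq_self_or_eq_succAbove i₀ i with rfl | ⟨j, rfl⟩
  · field_simp
  · field_simp
    linear_combination -h j

section NormalizedForm

variable {K : Type*} [Field K] {N : ℕ} (q : Fin (N + 1) → K) (i₀ : Fin (N + 1))

/-- When `q i₀ ≠ 0`, these are exactly the linear forms taking the value `q i₀` at `q`. -/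
noncomputable def normalizedForm (c : Fin N → K) : MvPolynomial (Fin (N + 1)) K :=
  X i₀ + ∑ j, C (c j) * (C (q i₀) * X (i₀.succAbove j) - C (q (i₀.succAbove j)) * X i₀)

theorem isHomogeneous_normalizedForm (c : Fin N → K) :
    (normalizedForm q i₀ c).IsHomogeneous 1 :=
  (isHomogeneous_X _ _).add <| IsHomogeneous.sum _ _ _ fun _ _ =>
    (((isHomogeneous_X _ _).C_mul _).sub ((isHomogeneous_X _ _).C_mul _)).C_mul _

theorem eval_normalizedForm (c : Fin N → K) (π : Fin (N + 1) → K) :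
    eval π (normalizedForm q i₀ c) =
      π i₀ + ∑ j, c j * (q i₀ * π (i₀.succAbove j) - q (i₀.succAbove j) * π i₀) := by
  simp [normalizedForm]

theorem eval_normalizedForm_self (c : Fin N → K) : eval q (normalizedForm q i₀ c) = q i₀ := by
  simp [eval_normalizedForm, mul_comm]

end NormalizedForm

section MomentFormsProd

variable {F K : Type*} [Field F] [Fintype F] [Field K] (φ : F →+* K) (n : ℕ)
  (q : Fin (n + 2 + 1) → K) (i₀ : Fin (n + 2 + 1))

noncomputable def momentFormsProd : MvPolynomial (Fin (n + 2 + 1)) K :=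
  ∏ uv : F × F, normalizedForm q i₀ (φ ∘ momentCoeffs n uv)

theorem isHomogeneous_momentFormsProd :
    (momentFormsProd φ n q i₀).IsHomogeneous (Fintype.card F ^ 2) := by
  simpa [momentFormsProd, sq] using IsHomogeneous.prod univ _ (fun _ => 1) fun uv _ =>
    isHomogeneous_normalizedForm q i₀ (φ ∘ momentCoeffs n uv)

theorem eval_momentFormsProd_self :
    eval q (momentFormsProd φ n q i₀) = q i₀ ^ (Fintype.card F ^ 2) := by
  simp [momentFormsProd, eval_normalizedForm_self, sq]

end MomentFormsProd

theorem momentFormsProd_mem_pointIdeal_pow {F : Type*} {K : Type} [Field F] [Fintype F] [Field K]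
    (φ : F →+* K) (n : ℕ) {w v : Fin (n + 2 + 1) → F} {i₀ : Fin (n + 2 + 1)} (hi₀ : w i₀ ≠ 0)
    (hv : v ∉ F ∙ w) :
    momentFormsProd φ n (φ ∘ w) i₀ ∈ pointIdeal (φ ∘ v) ^ (Fintype.card F - n) := by
  classical
  set b : Fin (n + 2) → F := fun j => w i₀ * v (i₀.succAbove j) - w (i₀.succAbove j) * v i₀
  have hb : b ≠ 0 := fun h => hv (mem_span_singleton_of_minors_eq_zero hi₀ (congrFun h))
  have heval : ∀ uv : F × F, eval (φ ∘ v) (normalizedForm (φ ∘ w) i₀ (φ ∘ momentCoeffs n uv)) =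
      φ (v i₀ + ∑ j, momentCoeffs n uv j * b j) := by
    simp [eval_normalizedForm, b]
  refine Ideal.prod_mem_pow_of_le_card <| (Nat.sub_le_iff_le_add'.2
    (card_le_add_card_zeros n (v i₀) hb)).trans <| card_le_card fun uv huv => ?_
  simp only [mem_filter, mem_univ, true_and] at huv ⊢
  exact Ideal.subset_span ⟨⟨1, isHomogeneous_normalizedForm _ _ _⟩, by rw [heval, huv, map_zero]⟩

theorem pointIdeal_le_ker_eval {K : Type} [Field K] {n : ℕ} (π : Fin n → K) :
    pointIdeal π ≤ RingHom.ker (eval π) :=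
  Ideal.span_le.2 fun _ hf => hf.2

attribute [local instance] MvPolynomial.gradedAlgebra in
theorem homogeneousComponent_mem_pointIdeal {K : Type} [Field K] {n : ℕ} {π : Fin n → K}
    {f : MvPolynomial (Fin n) K} (hf : f ∈ pointIdeal π) (i : ℕ) :
    homogeneousComponent i f ∈ pointIdeal π :=
  homogeneousComponent_mem_of_mem (Ideal.homogeneous_span _ _ fun _ hg => hg.1) hf i

theorem range_natCast_eq_range_castHom (K : Type*) [Ring K] (p : ℕ) [NeZero p] [CharP K p] :
    Set.range (Nat.cast : ℕ → K) = Set.range (ZMod.castHom (dvd_refl p) K) := by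
  rw [← (ZMod.natCast_zmod_surjective (n := p)).range_comp (ZMod.castHom (dvd_refl p) K)]
  congr 1
  ext n
  simp

theorem exists_notMem_span_castHom_comp_eq_iff {K σ : Type*} [Field K] {p : ℕ} [Fact p.Prime]
    [CharP K p] {w : σ → ZMod p} {π : σ → K} :
    (π ≠ 0 ∧ (∀ i, π i ∈ Set.range (Nat.cast : ℕ → K)) ∧
      ¬∃ c : K, π = c • (ZMod.castHom (dvd_refl p) K ∘ w)) ↔
    ∃ v ∉ ZMod p ∙ w, ZMod.castHom (dvd_refl p) K ∘ v = π := by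
  set φ := ZMod.castHom (dvd_refl p) K
  have hspan : ∀ v : σ → ZMod p, (∃ c : K, φ ∘ v = c • (φ ∘ w)) ↔ v ∈ ZMod p ∙ w := fun v => by
    rw [← comp_mem_span_singleton_iff φ, mem_span_singleton]
    simp only [eq_comm]
  constructor
  · rintro ⟨-, hrange, hline⟩
    simp only [range_natCast_eq_range_castHom K p] at hrange
    choose v hv using hrange
    obtain rfl : φ ∘ v = π := funext hv
    exact ⟨v, fun h => hline ((hspan v).2 h), rfl⟩
  · rintro ⟨v, hv, rfl⟩
    refine ⟨fun h0 => hv ((hspan v).1 ⟨0, by simp [h0]⟩), fun i => ?_, fun h => hv ((hspan v).1 h)⟩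
    rw [range_natCast_eq_range_castHom K p]
    exact ⟨v i, rfl⟩

theorem stmt13_general (p N m : ℕ) (hp : p.Prime)
    (hN : 2 * N = p + 1) (hm : 2 * m = p + 3)
    (K : Type) [Field K] [CharP K p]
    (q : Fin (N + 1) → K) (hq : q ≠ 0)
    (hq' : ∀ i, q i ∈ Set.range (Nat.cast : ℕ → K)) :
    let S : Set (Fin (N + 1) → K) :=
      {π | π ≠ 0 ∧ (∀ i, π i ∈ Set.range (Nat.cast : ℕ → K)) ∧
        ¬∃ c : K, π = c • q}
    let I : Ideal (MvPolynomial (Fin (N + 1)) K) := ⨅ π ∈ S, pointIdeal π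
    -- I^{((p+3)/2)} ⊄ I², i.e. I^{(Nr-(N-1))} ⊆ I^r fails for r = 2
    ¬ (⨅ π ∈ S, (pointIdeal π) ^ m) ≤ I ^ 2 := by
  intro S I hle
  have := Fact.mk hp
  obtain ⟨n, rfl⟩ : ∃ n, N = n + 2 := ⟨N - 2, by have := hp.two_le; omega⟩
  have hpn : p = 2 * n + 3 := by omega
  obtain rfl : m = n + 3 := by omega
  set φ := ZMod.castHom (dvd_refl p) K
  obtain ⟨w, rfl⟩ : ∃ w, φ ∘ w = q := by
    simp only [range_natCast_eq_range_castHom K p] at hq'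
    choose w hw using hq'
    exact ⟨w, funext hw⟩
  have hw : w ≠ 0 := fun h => hq (by simp [h])
  obtain ⟨i₀, hi₀⟩ : ∃ i, w i ≠ 0 := Function.ne_iff.mp hw
  have hmem : momentFormsProd φ n (φ ∘ w) i₀ ∈ ⨅ π ∈ S, pointIdeal π ^ (n + 3) := by
    simp only [Ideal.mem_iInf]
    intro π hπ
    obtain ⟨v, hv, rfl⟩ := exists_notMem_span_castHom_comp_eq_iff.1 hπ
    have h := momentFormsProd_mem_pointIdeal_pow φ n hi₀ hv
    rwa [ZMod.card, show p - n = n + 3 by omega] at h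
  have hlow : ∀ a ∈ I, ∀ i ≤ (p - 1) * (n + 2),
      eval (φ ∘ w) (homogeneousComponent i a) = 0 := by
    intro a ha i hi
    refine eval_eq_zero_of_forall_notMem_span φ (by simp)
      (homogeneousComponent_isHomogeneous i a) (by simpa [ZMod.card] using hi) hw fun v hv => ?_
    have hvS : φ ∘ v ∈ S := exists_notMem_span_castHom_comp_eq_iff.2 ⟨v, hv, rfl⟩
    have haπ : a ∈ pointIdeal (φ ∘ v) := Ideal.mem_iInf.1 (Ideal.mem_iInf.1 ha _) hvS
    exact pointIdeal_le_ker_eval _ (homogeneousComponent_mem_pointIdeal haπ i)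
  have hq0 := eval_homogeneousComponent_eq_zero_of_mem_sq hlow (hle hmem)
  have hdeg : 2 * ((p - 1) * (n + 2)) + 1 = Fintype.card (ZMod p) ^ 2 := by
    rw [ZMod.card, hpn, show 2 * n + 3 - 1 = 2 * n + 2 by omega]
    ring
  rw [hdeg, homogeneousComponent_eq_self (isHomogeneous_momentFormsProd φ n _ i₀),
    eval_momentFormsProd_self] at hq0
  exact pow_ne_zero _ ((map_ne_zero φ).2 hi₀) hq0

theorem stmt13 (p N m : ℕ) (hp : p.Prime) (hodd : Odd p)
    (hN : 2 * N = p + 1) (hm : 2 * m = p + 3)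
    (K : Type) [Field K] [CharP K p]
    (q : Fin (N + 1) → K) (hq : q ≠ 0)
    (hq' : ∀ i, q i ∈ Set.range (Nat.cast : ℕ → K)) :
    let S : Set (Fin (N + 1) → K) :=
      {π | π ≠ 0 ∧ (∀ i, π i ∈ Set.range (Nat.cast : ℕ → K)) ∧
        ¬∃ c : K, π = c • q}
    let I : Ideal (MvPolynomial (Fin (N + 1)) K) := ⨅ π ∈ S, pointIdeal π
    -- I^{((p+3)/2)} ⊄ I², i.e. I^{(Nr-(N-1))} ⊆ I^r fails for r = 2
    ¬ (⨅ π ∈ S, (pointIdeal π) ^ m) ≤ I ^ 2 :=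
  stmt13_general p N m hp hN hm K q hq hq'
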